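/- Let A, B be finite types. Let μ, ν : Matrix (B × A) (B × A) ℂ and ρ, ω : Matrix A A ℂ all be positive semidefinite, and let λ, κ : ℝ with 0 ≤ λ. If (λ : ℂ) • ν - μ is positive semidefinite and (κ : ℂ) • ω - ρ is positive semidefinite, then ((λ * κ : ℝ) : ℂ) • (ν ⋆ ω) - (μ ⋆ ρ) is positive semidefinite. (This is the core of the chain-rule inequality D_max^F(𝓜(ρ)) ≤ D_max^F(ρ) + D_max^F(𝓜) for the max-relative entropy, expressed through the Choi matrices μ, ν of the channels: if μ ≤ 2^{D_max(𝓜‖𝓝)} ν and ρ ≤ 2^{D_max(ρ‖ω)} ω then 𝓜(ρ) ≤ 2^{D_max(𝓜‖𝓝)+D_max(ρ‖ω)} 𝓝(ω).) -/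

import Mathlib

/-!
Writing `ρ = CᴴC`, the link product `N ⋆ ρ` is `∑ₖ Vₖᴴ N Vₖ` with `Vₖ = 1 ⊗ (row k of C)`, so it
is positive semidefinite whenever `N` and `ρ` are. The claim then follows from the bilinear
splitting `λκ (ν ⋆ ω) - μ ⋆ ρ = λ (ν ⋆ (κω - ρ)) + (λν - μ) ⋆ ρ`.
-/

open Matrix Kronecker BigOperators
open scoped ComplexOrder

/-- Link product of a bipartite matrix with a state. -/
noncomputable def linkState {S T : Type*} [Fintype T] (N : Matrix (S × T) (S × T) ℂ)
    (ρ : Matrix T T ℂ) : Matrix S S ℂ :=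
  Matrix.of fun s s' => ∑ t, ∑ t', N (s, t) (s', t') * ρ t t'

section LinkState

variable {S T : Type*} [Fintype T]

lemma linkState_sub_left (N M : Matrix (S × T) (S × T) ℂ) (ρ : Matrix T T ℂ) :
    linkState (N - M) ρ = linkState N ρ - linkState M ρ := by
  ext s s'
  simp [linkState, sub_mul, Finset.sum_sub_distrib]

lemma linkState_sub_right (N : Matrix (S × T) (S × T) ℂ) (ρ σ : Matrix T T ℂ) :
    linkState N (ρ - σ) = linkState N ρ - linkState N σ := by
  ext s s'
  simp [linkState, mul_sub, Finset.sum_sub_distrib]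

lemma linkState_smul_left (c : ℂ) (N : Matrix (S × T) (S × T) ℂ) (ρ : Matrix T T ℂ) :
    linkState (c • N) ρ = c • linkState N ρ := by
  ext s s'
  simp [linkState, Finset.mul_sum, mul_assoc]

lemma linkState_smul_right (c : ℂ) (N : Matrix (S × T) (S × T) ℂ) (ρ : Matrix T T ℂ) :
    linkState N (c • ρ) = c • linkState N ρ := by
  ext s s'
  simp [linkState, Finset.mul_sum, mul_left_comm]

def oneKroneckerCol (S : Type*) [DecidableEq S] (v : T → ℂ) : Matrix (S × T) S ℂ :=
  of fun p s => if p.1 = s then v p.2 else 0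

lemma linkState_conjTranspose_mul_self [Fintype S] [DecidableEq S]
    (N : Matrix (S × T) (S × T) ℂ) (C : Matrix T T ℂ) :
    linkState N (Cᴴ * C) = ∑ k, (oneKroneckerCol S (C k))ᴴ * N * oneKroneckerCol S (C k) := by
  ext s s'
  simp only [linkState, oneKroneckerCol, mul_apply, conjTranspose_apply, RCLike.star_def,
    Finset.mul_sum, Finset.sum_mul, of_apply, Matrix.sum_apply, apply_ite (starRingEnd ℂ),
    map_zero, ite_mul, mul_ite, zero_mul, mul_zero, Fintype.sum_prod_type, Finset.sum_ite_irrel,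
    Finset.sum_const_zero, Finset.sum_ite_eq', Finset.mem_univ, ↓reduceIte]
  rw [Finset.sum_comm]
  conv_rhs => rw [Finset.sum_comm]
  refine Finset.sum_congr rfl fun t' _ => ?_
  rw [Finset.sum_comm]
  refine Finset.sum_congr rfl fun t _ => Finset.sum_congr rfl fun k _ => ?_
  ring

open scoped MatrixOrder in
lemma Matrix.PosSemidef.linkState [Fintype S] {N : Matrix (S × T) (S × T) ℂ} {ρ : Matrix T T ℂ}
    (hN : N.PosSemidef) (hρ : ρ.PosSemidef) : (linkState N ρ).PosSemidef := by
  classical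
  obtain ⟨C, rfl⟩ := CStarAlgebra.nonneg_iff_eq_star_mul_self.mp hρ.nonneg
  rw [star_eq_conjTranspose, linkState_conjTranspose_mul_self]
  exact posSemidef_sum _ fun k _ => hN.conjTranspose_mul_mul_same _

end LinkState

theorem stmt15_general {A B : Type*} [Fintype A] [Fintype B]
    (μ ν : Matrix (B × A) (B × A) ℂ) (ρ ω : Matrix A A ℂ)
    (hν : ν.PosSemidef) (hρ : ρ.PosSemidef)
    (lam kap : ℝ) (hlam : 0 ≤ lam)
    (h1 : ((lam : ℂ) • ν - μ).PosSemidef)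
    (h2 : ((kap : ℂ) • ω - ρ).PosSemidef) :
    (((lam * kap : ℝ) : ℂ) • linkState ν ω - linkState μ ρ).PosSemidef := by
  have bilinear_split : ((lam * kap : ℝ) : ℂ) • linkState ν ω - linkState μ ρ
      = (lam : ℂ) • linkState ν ((kap : ℂ) • ω - ρ) + linkState ((lam : ℂ) • ν - μ) ρ := by
    rw [linkState_sub_right, linkState_sub_left, linkState_smul_right, linkState_smul_left,
      smul_sub, smul_smul]
    push_cast
    abel
  rw [bilinear_split]
  exact ((hν.linkState h2).smul (by exact_mod_cast hlam)).add (h1.linkState hρ)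

theorem stmt15 {A B : Type*} [Fintype A] [Fintype B]
    (μ ν : Matrix (B × A) (B × A) ℂ) (ρ ω : Matrix A A ℂ)
    (hμ : μ.PosSemidef) (hν : ν.PosSemidef) (hρ : ρ.PosSemidef) (hω : ω.PosSemidef)
    (lam kap : ℝ) (hlam : 0 ≤ lam)
    (h1 : ((lam : ℂ) • ν - μ).PosSemidef)
    (h2 : ((kap : ℂ) • ω - ρ).PosSemidef) :
    (((lam * kap : ℝ) : ℂ) • linkState ν ω - linkState μ ρ).PosSemidef :=
  stmt15_general μ ν ρ ω hν hρ lam kap hlam h1 h2
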